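/- For a renaming ρ : Γ → Γ' ⊎ {□} and a name x ∈ Γ, the pair of monotone maps (apply, unapply) between the lattice of slices of (ρ, x) and the lattice of slices of ρ x forms a Galois connection: apply ∘ unapply ≥ id and unapply ∘ apply ≤ id. -/

import Mathlib

/-- Order on name slices with erasure: `□ ≤ z` for all `z`, and `z ≤ z`.
(`none` plays the role of the erased name `□`.) -/
def ole {α : Type*} (z w : Option α) : Prop := z = none ∨ z = w

/-- Pointwise order on (slices of) renamings `Γ → Γ' ⊎ {□}`. -/
def rleOpt {Γ Γ' : ℕ} (σ ρ : Fin Γ → Option (Fin Γ')) : Prop := ∀ y, ole (σ y) (ρ y)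

/-- `apply (σ, z)`: apply the renaming slice `σ` to the slice `z` of the name `x`:
`apply (σ, □) = □` and `apply (σ, x) = σ x`. -/
def renApp {Γ Γ' : ℕ} (σ : Fin Γ → Option (Fin Γ')) (x : Fin Γ)
    (z : Option (Fin Γ)) : Option (Fin Γ') :=
  if z = some x then σ x else none

/-- `ρ[x ↦ w]`: the least renaming slice mapping `x` to `w` (everything else to `□`). -/
def mapsTo {Γ Γ' : ℕ} (x : Fin Γ) (w : Option (Fin Γ')) : Fin Γ → Option (Fin Γ') :=
  fun y => if y = x then w else none

/-- `x⁻¹ w`: the least slice of `x` such that applying the renaming gives back `w`: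
`□` if `w = □`, and `x` otherwise. -/
def unappName {Γ Γ' : ℕ} (x : Fin Γ) (w : Option (Fin Γ')) : Option (Fin Γ) :=
  if w = none then none else some x

section Slices

variable {Γ Γ' : ℕ}

theorem ole_none {α : Type*} (w : Option α) : ole none w := Or.inl rfl

theorem ole_refl {α : Type*} (w : Option α) : ole w w := Or.inr rfl

theorem renApp_none (σ : Fin Γ → Option (Fin Γ')) (x : Fin Γ) : renApp σ x none = none := by
  simp [renApp]

theorem renApp_some_self (σ : Fin Γ → Option (Fin Γ')) (x : Fin Γ) :
    renApp σ x (some x) = σ x := by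
  simp [renApp]

theorem ole_renApp_apply (σ : Fin Γ → Option (Fin Γ')) (x : Fin Γ) (z : Option (Fin Γ)) :
    ole (renApp σ x z) (σ x) := by
  unfold renApp
  split
  · exact ole_refl _
  · exact ole_none _

theorem renApp_mono {σ σ' : Fin Γ → Option (Fin Γ')} {x : Fin Γ} {z z' : Option (Fin Γ)}
    (hσ : rleOpt σ σ') (hz : ole z z') : ole (renApp σ x z) (renApp σ' x z') := by
  rcases hz with rfl | rfl
  · rw [renApp_none]
    exact ole_none _
  · unfold renApp
    split
    · exact hσ x
    · exact ole_refl _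

theorem mapsTo_mono (x : Fin Γ) {w w' : Option (Fin Γ')} (hw : ole w w') :
    rleOpt (mapsTo x w) (mapsTo x w') := by
  intro y
  unfold mapsTo
  split
  · exact hw
  · exact ole_refl _

theorem unappName_mono (x : Fin Γ) {w w' : Option (Fin Γ')} (hw : ole w w') :
    ole (unappName x w) (unappName x w') := by
  rcases hw with rfl | rfl
  · simp [unappName, ole_none]
  · exact ole_refl _

theorem ole_unappName_self (x : Fin Γ) (w : Option (Fin Γ')) :
    ole (unappName x w) (some x) := by
  unfold unappName
  split
  · exact ole_none _
  · exact ole_refl _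

theorem renApp_mapsTo_unappName (x : Fin Γ) (w : Option (Fin Γ')) :
    renApp (mapsTo x w) x (unappName x w) = w := by
  by_cases hw : w = none
  · simp [hw, unappName, renApp_none]
  · simp [hw, unappName, renApp_some_self, mapsTo]

theorem mapsTo_le {σ : Fin Γ → Option (Fin Γ')} {x : Fin Γ} {w : Option (Fin Γ')}
    (hw : ole w (σ x)) : rleOpt (mapsTo x w) σ := by
  intro y
  unfold mapsTo
  split
  · subst y
    exact hw
  · exact ole_none _

theorem unappName_renApp_le (σ : Fin Γ → Option (Fin Γ')) {x : Fin Γ} {z : Option (Fin Γ)}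
    (hz : ole z (some x)) : ole (unappName x (renApp σ x z)) z := by
  rcases hz with rfl | rfl
  · simp [renApp_none, unappName, ole_none]
  · exact ole_unappName_self x _

end Slices

/-- for a renaming `ρ : Γ → Γ' ⊎ {□}` and a name `x ∈ Γ`, the pair of
monotone maps `apply : ↓(ρ, x) → ↓(ρ x)` and `unapply = w ↦ (ρ[x↦w], x⁻¹w)` forms a
Galois connection: `apply ∘ unapply ≥ id` and `unapply ∘ apply ≤ id`. -/
theorem renaming_application_galois (Γ Γ' : ℕ) (ρ : Fin Γ → Option (Fin Γ'))
    (x : Fin Γ) :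
    -- apply is monotone on slices of (ρ, x)
    (∀ σ σ' z z', rleOpt σ ρ → rleOpt σ' ρ → ole z (some x) → ole z' (some x) →
      rleOpt σ σ' → ole z z' → ole (renApp σ x z) (renApp σ' x z')) ∧
    -- unapply is monotone on slices of ρ x
    (∀ w w', ole w (ρ x) → ole w' (ρ x) → ole w w' →
      rleOpt (mapsTo x w) (mapsTo x w') ∧ ole (unappName x w) (unappName x w')) ∧
    -- apply ∘ unapply ≥ id on slices of ρ x
    (∀ w, ole w (ρ x) → ole w (renApp (mapsTo x w) x (unappName x w))) ∧
    -- unapply ∘ apply ≤ id on slices of (ρ, x)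
    (∀ σ z, rleOpt σ ρ → ole z (some x) →
      rleOpt (mapsTo x (renApp σ x z)) σ ∧ ole (unappName x (renApp σ x z)) z) := by
  refine ⟨?_, ?_, ?_, ?_⟩
  · intro σ σ' z z' _ _ _ _ hσ hz
    exact renApp_mono hσ hz
  · intro w w' _ _ hw
    exact ⟨mapsTo_mono x hw, unappName_mono x hw⟩
  · intro w _
    rw [renApp_mapsTo_unappName]
    exact ole_refl w
  · intro σ z _ hz
    exact ⟨mapsTo_le (ole_renApp_apply σ x z), unappName_renApp_le σ hz⟩
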